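/- Let G be a finite simple graph such that G or its complement is disconnected, and suppose χ_f(G) > Ξ(G). Then G has a proper induced subgraph S with χ_f(S) > Ξ(S). -/

import Mathlib

open Module

/-- An orthogonal representation (OR) of a simple graph `G` in `ℂ^d`: an injective map from the
vertices of `G` to one-dimensional subspaces of `ℂ^d` such that adjacent vertices are mapped to
orthogonal subspaces. -/
def IsOrthRep {V : Type*} (G : SimpleGraph V) (d : ℕ)
    (φ : V → Submodule ℂ (EuclideanSpace ℂ (Fin d))) : Prop :=
  Function.Injective φ ∧ (∀ v, Module.finrank ℂ (φ v) = 1) ∧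
    ∀ u v : V, G.Adj u v → φ u ≤ (φ v)ᗮ

/-- A faithful orthogonal representation (FOR) of a simple graph `G` in `ℂ^d`: an injective map
from the vertices of `G` to one-dimensional subspaces of `ℂ^d` such that two distinct vertices
are adjacent if and only if their images are orthogonal subspaces. -/
def IsFaithfulOrthRep {V : Type*} (G : SimpleGraph V) (d : ℕ)
    (φ : V → Submodule ℂ (EuclideanSpace ℂ (Fin d))) : Prop :=
  Function.Injective φ ∧ (∀ v, Module.finrank ℂ (φ v) = 1) ∧
    ∀ u v : V, u ≠ v → (G.Adj u v ↔ φ u ≤ (φ v)ᗮ)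

/-- `G` admits an orthogonal representation in `ℂ^d`. -/
def HasOR {V : Type*} (G : SimpleGraph V) (d : ℕ) : Prop := ∃ φ, IsOrthRep G d φ

/-- `G` admits a faithful orthogonal representation in `ℂ^d`. -/
def HasFOR {V : Type*} (G : SimpleGraph V) (d : ℕ) : Prop := ∃ φ, IsFaithfulOrthRep G d φ

/-- `ξ(G)`: the smallest dimension `d` such that `G` admits an orthogonal representation
in `ℂ^d`. -/
noncomputable def xi {V : Type*} (G : SimpleGraph V) : ℕ := sInf {d | HasOR G d}

/-- `Ξ(G)`: the smallest dimension `d` such that `G` admits a faithful orthogonal representation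
in `ℂ^d`. -/
noncomputable def Xi {V : Type*} (G : SimpleGraph V) : ℕ := sInf {d | HasFOR G d}

/-- A `b`-fold coloring of `G` with `a` colors: each vertex receives a set of `b` colors out of
`a` colors such that adjacent vertices receive disjoint sets. -/
def HasFoldColoring {V : Type*} (G : SimpleGraph V) (a b : ℕ) : Prop :=
  ∃ c : V → Finset (Fin a), (∀ v, (c v).card = b) ∧
    ∀ u v : V, G.Adj u v → Disjoint (c u) (c v)

/-- The fractional chromatic number `χ_f(G)`: the infimum of `a / b` over all `b`-fold
colorings of `G` with `a` colors. -/
noncomputable def fracChrom {V : Type*} (G : SimpleGraph V) : ℝ :=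
  sInf {x : ℝ | ∃ a b : ℕ, 0 < b ∧ HasFoldColoring G a b ∧ x = (a : ℝ) / b}

/-- The join `G₁ + G₂` of two graphs: their disjoint union together with one additional edge
between every pair of vertices taken one from each graph. -/
def graphJoin {V₁ V₂ : Type*} (G₁ : SimpleGraph V₁) (G₂ : SimpleGraph V₂) :
    SimpleGraph (V₁ ⊕ V₂) :=
  (G₁ ⊕g G₂) ⊔ completeBipartiteGraph V₁ V₂

/-!
Suppose every proper induced subgraph `S` satisfies `χ_f(S) ≤ Ξ(S)`, and split the vertices into
two nonempty parts `s`, `sᶜ` with no edges (if `G` is disconnected) or all edges (if `Gᶜ` is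
disconnected) between them. In the first case colorings of the parts can share their palette, so
`χ_f(G) ≤ max (χ_f(G[s])) (χ_f(G[sᶜ]))`, and `Ξ` is monotone under taking induced subgraphs. In
the second case the palettes must be disjoint, so `χ_f(G) ≤ χ_f(G[s]) + χ_f(G[sᶜ])`; but in a
faithful representation of `G` the vectors of `s` are orthogonal to the span `W` of those of
`sᶜ`, giving faithful representations of `G[s]` in `Wᗮ` and of `G[sᶜ]` in `W`, whence
`Ξ(G[s]) + Ξ(G[sᶜ]) ≤ Ξ(G)`. Either way `χ_f(G) ≤ Ξ(G)`.
-/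

open scoped InnerProductSpace

lemma Submodule.exists_eq_span_singleton_of_finrank_eq_one {K E : Type*} [Field K]
    [AddCommGroup E] [Module K E] {W : Submodule K E} (h : finrank K W = 1) :
    ∃ x, x ≠ 0 ∧ W = K ∙ x := by
  have := FiniteDimensional.of_finrank_eq_succ h
  obtain ⟨x, hx⟩ := (W.finrank_le_one_iff_isPrincipal.mp h.le).principal
  refine ⟨x, ?_, hx⟩
  rintro rfl
  rw [hx, Submodule.span_zero_singleton, finrank_bot] at h
  exact zero_ne_one h

lemma Submodule.span_singleton_le_orthogonal_span_singleton_iff {𝕜 E : Type*} [RCLike 𝕜]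
    [NormedAddCommGroup E] [InnerProductSpace 𝕜 E] (x y : E) :
    (𝕜 ∙ x) ≤ (𝕜 ∙ y)ᗮ ↔ ⟪x, y⟫_𝕜 = 0 := by
  rw [Submodule.span_singleton_le_iff_mem, Submodule.mem_orthogonal_singleton_iff_inner_right,
    inner_eq_zero_symm]

section Representation

variable {V E F : Type*} [NormedAddCommGroup E] [InnerProductSpace ℂ E]
  [NormedAddCommGroup F] [InnerProductSpace ℂ F] {G : SimpleGraph V}

def IsFaithfulVecRep (G : SimpleGraph V) (f : V → E) : Prop :=
  (∀ v, f v ≠ 0) ∧ Function.Injective (fun v => ℂ ∙ f v) ∧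
    ∀ u v, u ≠ v → (G.Adj u v ↔ ⟪f u, f v⟫_ℂ = 0)

lemma hasFOR_iff_exists_isFaithfulVecRep (G : SimpleGraph V) (d : ℕ) :
    HasFOR G d ↔ ∃ f : V → EuclideanSpace ℂ (Fin d), IsFaithfulVecRep G f := by
  constructor
  · rintro ⟨φ, hinj, hrank, hadj⟩
    choose f hf0 hφ using fun v => Submodule.exists_eq_span_singleton_of_finrank_eq_one (hrank v)
    refine ⟨f, hf0, fun u v huv => hinj (by rwa [hφ, hφ]), fun u v huv => ?_⟩
    rw [hadj u v huv, hφ, hφ, Submodule.span_singleton_le_orthogonal_span_singleton_iff]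
  · rintro ⟨f, hf0, hinj, hadj⟩
    refine ⟨fun v => ℂ ∙ f v, hinj, fun v => finrank_span_singleton (hf0 v), fun u v huv => ?_⟩
    rw [hadj u v huv, Submodule.span_singleton_le_orthogonal_span_singleton_iff]

lemma isFaithfulVecRep_linearIsometry_comp_iff (L : E →ₗᵢ[ℂ] F) {f : V → E} :
    IsFaithfulVecRep G (L ∘ f) ↔ IsFaithfulVecRep G f := by
  have hspan : ∀ v, ℂ ∙ L (f v) = (ℂ ∙ f v).map L.toLinearMap := fun v => by
    rw [Submodule.map_span, Set.image_singleton]; rfl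
  have hmap := Submodule.map_injective_of_injective L.injective
  simp only [IsFaithfulVecRep, Function.comp_apply, L.inner_map_map, ne_eq,
    map_eq_zero_iff L L.injective, hspan]
  rw [← Function.comp_def (Submodule.map _), hmap.of_comp_iff]

lemma IsFaithfulVecRep.induce {f : V → E} (hf : IsFaithfulVecRep G f) (s : Set V) :
    IsFaithfulVecRep (G.induce s) (fun v : s => f v) := by
  obtain ⟨hf0, hinj, hadj⟩ := hf
  exact ⟨fun v => hf0 v, fun u v huv => Subtype.ext (hinj huv),
    fun u v huv => by simpa using hadj u v (Subtype.coe_ne_coe.mpr huv)⟩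

lemma IsFaithfulVecRep.hasFOR [FiniteDimensional ℂ E] {f : V → E}
    (hf : IsFaithfulVecRep G f) : HasFOR G (finrank ℂ E) :=
  (hasFOR_iff_exists_isFaithfulVecRep G _).mpr ⟨_,
    (isFaithfulVecRep_linearIsometry_comp_iff
      (stdOrthonormalBasis ℂ E).repr.toLinearIsometry).mpr hf⟩

lemma IsFaithfulVecRep.hasFOR_of_forall_mem [FiniteDimensional ℂ E] {f : V → E}
    (hf : IsFaithfulVecRep G f) (W : Submodule ℂ E) (hW : ∀ v, f v ∈ W) :
    HasFOR G (finrank ℂ W) :=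
  IsFaithfulVecRep.hasFOR (f := fun v => (⟨f v, hW v⟩ : W))
    ((isFaithfulVecRep_linearIsometry_comp_iff W.subtypeₗᵢ).mp hf)

end Representation

section Existence

variable {V : Type*} [DecidableEq V] (G : SimpleGraph V) [DecidableRel G.Adj]

/-- Coordinates are indexed by the non-edges `z` (loops `s(v, v)` included) and `v` is supported
on those containing it: distinct `u`, `v` share the coordinate `s(u, v)` exactly when they are
non-adjacent, and the loop `s(v, v)` separates the line of `v` from all others. -/
def nonEdgeIncidence (v : V) : EuclideanSpace ℂ (Sym2 V) :=
  WithLp.toLp 2 fun z => if v ∈ z ∧ z ∉ G.edgeSet then 1 else 0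

lemma nonEdgeIncidence_diag (u v : V) :
    nonEdgeIncidence G v s(u, u) = if v = u then 1 else 0 := by
  by_cases h : v = u <;> simp [nonEdgeIncidence, h]

lemma inner_nonEdgeIncidence [Fintype V] {u v : V} (huv : u ≠ v) :
    ⟪nonEdgeIncidence G u, nonEdgeIncidence G v⟫_ℂ = if G.Adj u v then 0 else 1 := by
  rw [PiLp.inner_apply, Finset.sum_eq_single s(u, v)]
  · by_cases h : G.Adj u v <;> simp [nonEdgeIncidence, h]
  · intro z _ hz
    have : ¬ (u ∈ z ∧ v ∈ z) := fun h => hz ((Sym2.mem_and_mem_iff huv).mp h)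
    simp only [nonEdgeIncidence, PiLp.toLp_apply]
    split_ifs <;> simp_all
  · simp

lemma isFaithfulVecRep_nonEdgeIncidence [Fintype V] : IsFaithfulVecRep G (nonEdgeIncidence G) := by
  refine ⟨fun v h => ?_, fun u v huv => ?_, fun u v huv => ?_⟩
  · simpa [nonEdgeIncidence_diag] using congrArg (· s(v, v)) h
  · by_contra hne
    obtain ⟨c, hc⟩ := Submodule.span_singleton_eq_span_singleton.mp huv
    simpa [nonEdgeIncidence_diag, hne] using congrArg (· s(v, v)) hc
  · rw [inner_nonEdgeIncidence G huv]
    split_ifs with h <;> simp [h]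

end Existence

section Xi

variable {V : Type*} (G : SimpleGraph V)

lemma exists_hasFOR [Finite V] : ∃ d, HasFOR G d := by
  classical
  have := Fintype.ofFinite V
  exact ⟨_, (isFaithfulVecRep_nonEdgeIncidence G).hasFOR⟩

lemma hasFOR_Xi [Finite V] : HasFOR G (Xi G) :=
  Nat.sInf_mem (exists_hasFOR G)

lemma Xi_le {d : ℕ} (h : HasFOR G d) : Xi G ≤ d :=
  Nat.sInf_le h

lemma Xi_induce_le [Finite V] (s : Set V) : Xi (G.induce s) ≤ Xi G := by
  obtain ⟨f, hf⟩ := (hasFOR_iff_exists_isFaithfulVecRep G _).mp (hasFOR_Xi G)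
  simpa using Xi_le _ ((hf.induce s).hasFOR)

lemma Xi_induce_add_Xi_induce_compl_le [Finite V] (s : Set V)
    (hjoin : ∀ u v, u ∈ s → v ∉ s → G.Adj u v) :
    Xi (G.induce s) + Xi (G.induce sᶜ) ≤ Xi G := by
  obtain ⟨f, hf⟩ := (hasFOR_iff_exists_isFaithfulVecRep G _).mp (hasFOR_Xi G)
  set W := Submodule.span ℂ (f '' sᶜ)
  have hmem : ∀ v : (sᶜ : Set V), f v ∈ W := fun v => Submodule.subset_span ⟨v, v.2, rfl⟩
  have hmem_orth : ∀ u : s, f u ∈ Wᗮ := fun u => by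
    have hW : W ≤ (ℂ ∙ f u)ᗮ := Submodule.span_le.mpr <| by
      rintro - ⟨v, hv, rfl⟩
      exact Submodule.mem_orthogonal_singleton_iff_inner_right.mpr
        ((hf.2.2 u v (ne_of_mem_of_not_mem u.2 hv)).mp (hjoin u v u.2 hv))
    exact (Submodule.mem_orthogonal' _ _).mpr fun w hw =>
      Submodule.mem_orthogonal_singleton_iff_inner_right.mp (hW hw)
  have h₁ := Xi_le _ ((hf.induce s).hasFOR_of_forall_mem Wᗮ hmem_orth)
  have h₂ := Xi_le _ ((hf.induce sᶜ).hasFOR_of_forall_mem W hmem)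
  have hW := W.finrank_add_finrank_orthogonal
  rw [finrank_euclideanSpace_fin] at hW
  omega

end Xi

section FractionalChromatic

variable {V : Type*} (G : SimpleGraph V)

lemma hasFoldColoring_card_one [Fintype V] : HasFoldColoring G (Fintype.card V) 1 :=
  ⟨fun v => {Fintype.equivFin V v}, fun _ => rfl, fun _ _ huv =>
    Finset.disjoint_singleton.mpr fun h => huv.ne ((Fintype.equivFin V).injective h)⟩

variable {G}

lemma HasFoldColoring.mul_right {a b : ℕ} (h : HasFoldColoring G a b) (k : ℕ) :
    HasFoldColoring G (a * k) (b * k) := by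
  obtain ⟨c, hcard, hdisj⟩ := h
  refine ⟨fun v => (c v ×ˢ Finset.univ).map finProdFinEquiv.toEmbedding,
    fun v => by simp [hcard v], fun u v huv => ?_⟩
  rw [Finset.disjoint_map]
  exact Finset.disjoint_product.mpr (Or.inl (hdisj u v huv))

lemma HasFoldColoring.piecewise {s : Set V} {a₁ a₂ a b : ℕ}
    (h₁ : HasFoldColoring (G.induce s) a₁ b) (h₂ : HasFoldColoring (G.induce sᶜ) a₂ b)
    (e₁ : Fin a₁ ↪ Fin a) (e₂ : Fin a₂ ↪ Fin a)
    (hcross : ∀ u v, u ∈ s → v ∉ s → G.Adj u v → ∀ i j, e₁ i ≠ e₂ j) :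
    HasFoldColoring G a b := by
  classical
  obtain ⟨c₁, hcard₁, hdisj₁⟩ := h₁
  obtain ⟨c₂, hcard₂, hdisj₂⟩ := h₂
  have hdisj_cross : ∀ u v, u ∈ s → v ∉ s → G.Adj u v →
      ∀ x y, Disjoint (Finset.map e₁ x) (Finset.map e₂ y) := fun u v hu hv huv x y =>
    Finset.disjoint_left.mpr <| by
      simp only [Finset.mem_map]
      rintro _ ⟨i, -, rfl⟩ ⟨j, -, hj⟩
      exact hcross u v hu hv huv i j hj.symm
  refine ⟨fun v => if h : v ∈ s then (c₁ ⟨v, h⟩).map e₁ else (c₂ ⟨v, h⟩).map e₂,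
    fun v => by dsimp only; split_ifs <;> simp [hcard₁, hcard₂], fun u v huv => ?_⟩
  by_cases hu : u ∈ s <;> by_cases hv : v ∈ s <;> simp only [hu, hv, dite_true, dite_false]
  · exact (Finset.disjoint_map _).mpr (hdisj₁ ⟨u, hu⟩ ⟨v, hv⟩ huv)
  · exact hdisj_cross u v hu hv huv _ _
  · exact (hdisj_cross v u hv hu huv.symm _ _).symm
  · exact (Finset.disjoint_map _).mpr (hdisj₂ ⟨u, hu⟩ ⟨v, hv⟩ huv)

lemma fracChrom_le {a b : ℕ} (hb : 0 < b) (h : HasFoldColoring G a b) :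
    fracChrom G ≤ a / b := by
  refine csInf_le ⟨0, ?_⟩ ⟨a, b, hb, h, rfl⟩
  rintro _ ⟨a, b, -, -, rfl⟩
  positivity

lemma exists_hasFoldColoring_div_lt [Finite V] {x : ℝ} (h : fracChrom G < x) :
    ∃ a b : ℕ, 0 < b ∧ HasFoldColoring G a b ∧ (a : ℝ) / b < x := by
  have := Fintype.ofFinite V
  obtain ⟨_, ⟨a, b, hb, hab, rfl⟩, hlt⟩ := exists_lt_of_csInf_lt
    (by exact ⟨_, Fintype.card V, 1, one_pos, hasFoldColoring_card_one G, rfl⟩) h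
  exact ⟨a, b, hb, hab, hlt⟩

lemma fracChrom_nonpos [IsEmpty V] : fracChrom G ≤ 0 := by
  have h : HasFoldColoring G 0 1 := ⟨isEmptyElim, isEmptyElim, isEmptyElim⟩
  simpa using fracChrom_le one_pos h

lemma fracChrom_le_max_of_forall_not_adj [Finite V] (s : Set V)
    (hsplit : ∀ u v, u ∈ s → v ∉ s → ¬ G.Adj u v) :
    fracChrom G ≤ max (fracChrom (G.induce s)) (fracChrom (G.induce sᶜ)) := by
  by_contra! hlt
  obtain ⟨a₁, b₁, hb₁, h₁, hlt₁⟩ := exists_hasFoldColoring_div_lt ((le_max_left _ _).trans_lt hlt)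
  obtain ⟨a₂, b₂, hb₂, h₂, hlt₂⟩ := exists_hasFoldColoring_div_lt ((le_max_right _ _).trans_lt hlt)
  have h₂' : HasFoldColoring (G.induce sᶜ) (a₂ * b₁) (b₁ * b₂) :=
    mul_comm b₂ b₁ ▸ h₂.mul_right b₁
  have hG := fracChrom_le (Nat.mul_pos hb₁ hb₂) ((h₁.mul_right b₂).piecewise h₂'
    (Fin.castLEEmb (le_max_left _ _)) (Fin.castLEEmb (le_max_right _ _))
    fun u v hu hv huv => absurd huv (hsplit u v hu hv))
  have hval : ((max (a₁ * b₂) (a₂ * b₁) : ℕ) : ℝ) / (b₁ * b₂ : ℕ) =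
      max (a₁ / b₁ : ℝ) (a₂ / b₂) := by
    have : (0 : ℝ) < b₁ := by exact_mod_cast hb₁
    have : (0 : ℝ) < b₂ := by exact_mod_cast hb₂
    rw [Nat.cast_max, ← max_div_div_right (by positivity)]
    push_cast
    congr 1 <;> field_simp
  rw [hval] at hG
  exact (hG.trans_lt (max_lt hlt₁ hlt₂)).false

lemma fracChrom_le_add [Finite V] (s : Set V) :
    fracChrom G ≤ fracChrom (G.induce s) + fracChrom (G.induce sᶜ) := by
  by_contra! hlt
  obtain ⟨a₁, b₁, hb₁, h₁, hlt₁⟩ := exists_hasFoldColoring_div_lt (lt_sub_iff_add_lt.mpr hlt)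
  obtain ⟨a₂, b₂, hb₂, h₂, hlt₂⟩ := exists_hasFoldColoring_div_lt (lt_sub_comm.mp hlt₁)
  have h₂' : HasFoldColoring (G.induce sᶜ) (a₂ * b₁) (b₁ * b₂) :=
    mul_comm b₂ b₁ ▸ h₂.mul_right b₁
  have hG := fracChrom_le (Nat.mul_pos hb₁ hb₂) ((h₁.mul_right b₂).piecewise h₂'
    (Fin.castAddEmb _) (Fin.natAddEmb _) fun _ _ _ _ _ i j hij => by
      simp only [Fin.ext_iff, Fin.castAddEmb_apply, Fin.natAddEmb_apply, Fin.val_castAdd,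
        Fin.val_natAdd] at hij
      omega)
  have hval : ((a₁ * b₂ + a₂ * b₁ : ℕ) : ℝ) / (b₁ * b₂ : ℕ) = a₁ / b₁ + a₂ / b₂ := by
    have : (0 : ℝ) < b₁ := by exact_mod_cast hb₁
    have : (0 : ℝ) < b₂ := by exact_mod_cast hb₂
    push_cast
    field_simp
  rw [hval] at hG
  linarith

end FractionalChromatic

lemma SimpleGraph.exists_split_of_not_connected {V : Type*} [Nonempty V] {H : SimpleGraph V}
    (h : ¬ H.Connected) :
    ∃ s : Set V, s ≠ Set.univ ∧ sᶜ ≠ Set.univ ∧ ∀ u v, u ∈ s → v ∉ s → ¬ H.Adj u v := by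
  obtain ⟨u, v, huv⟩ : ∃ u v, ¬ H.Reachable u v := by
    simpa [SimpleGraph.connected_iff, SimpleGraph.Preconnected] using h
  exact ⟨{w | H.Reachable u w}, fun hs => huv (Set.eq_univ_iff_forall.mp hs v),
    Set.compl_ne_univ.mpr ⟨u, .refl u⟩, fun _ _ hu hv hadj => hv (hu.trans hadj.reachable)⟩

/-- If `G` or its complement is disconnected and `χ_f(G) > Ξ(G)`, then `G` has a
proper induced subgraph `S` with `χ_f(S) > Ξ(S)`. -/
theorem stmt14 {V : Type*} [Fintype V] (G : SimpleGraph V)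
    (hdisc : ¬ G.Connected ∨ ¬ Gᶜ.Connected)
    (hG : (Xi G : ℝ) < fracChrom G) :
    ∃ s : Set V, s ≠ Set.univ ∧ (Xi (G.induce s) : ℝ) < fracChrom (G.induce s) := by
  by_contra! hsub
  cases isEmpty_or_nonempty V
  · exact hG.not_ge (fracChrom_nonpos.trans (Nat.cast_nonneg _))
  refine hG.not_ge ?_
  rcases hdisc with hdisc | hdisc
  · obtain ⟨s, hs, hsc, hsplit⟩ := SimpleGraph.exists_split_of_not_connected hdisc
    calc fracChrom G ≤ max (fracChrom (G.induce s)) (fracChrom (G.induce sᶜ)) :=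
          fracChrom_le_max_of_forall_not_adj s hsplit
      _ ≤ max (Xi (G.induce s) : ℝ) (Xi (G.induce sᶜ)) := max_le_max (hsub s hs) (hsub sᶜ hsc)
      _ ≤ Xi G := by exact_mod_cast max_le (Xi_induce_le G s) (Xi_induce_le G sᶜ)
  · obtain ⟨s, hs, hsc, hsplit⟩ := SimpleGraph.exists_split_of_not_connected hdisc
    have hjoin : ∀ u v, u ∈ s → v ∉ s → G.Adj u v := fun u v hu hv => by
      by_contra hnadj
      exact hsplit u v hu hv ((G.compl_adj u v).mpr ⟨ne_of_mem_of_not_mem hu hv, hnadj⟩)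
    calc fracChrom G ≤ fracChrom (G.induce s) + fracChrom (G.induce sᶜ) := fracChrom_le_add s
      _ ≤ Xi (G.induce s) + Xi (G.induce sᶜ) := add_le_add (hsub s hs) (hsub sᶜ hsc)
      _ ≤ Xi G := by exact_mod_cast Xi_induce_add_Xi_induce_compl_le G s hjoin
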